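/- Let h ≥ h' ≥ 1 and let h_1, h_2 be positive integers with (h_1 − 1)(h_2 − 1) ≥ h − h'. Assume m − h_1 ≥ 2 and n − h_2 ≥ 2. If there exists an MR (m, n, a=1, b=1, h) grid code over a finite field F_q, then there also exists an MR (m−h_1, n−h_2, a=1, b=1, h') grid code over the same field F_q. In particular, q(m, n, 1, 1, h) ≥ q(m−h_1, n−h_2, 1, 1, h'), where q(·) denotes the minimum field size over which an MR grid code with those parameters exists. -/

import Mathlib

open Finset

/-- A subset of `[m] × [n]`, viewed as the edge set of a bipartite graph with left
vertex set `Fin m` and right vertex set `Fin n`, is a *simple cycle* (of length `2k`,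
`k ≥ 2`) if it has the form
`{(i₁,j₁),(i₂,j₁),(i₂,j₂),(i₃,j₂),…,(i_k,j_k),(i₁,j_k)}`
for pairwise distinct `i₁,…,i_k` and pairwise distinct `j₁,…,j_k`. -/
def IsSimpleCycle {m n : ℕ} (C : Finset (Fin m × Fin n)) : Prop :=
  ∃ k : ℕ, 2 ≤ k ∧ ∃ (I : ℕ → Fin m) (J : ℕ → Fin n),
    Set.InjOn I (Set.Iio k) ∧ Set.InjOn J (Set.Iio k) ∧
    C = ((Finset.range k).image fun ℓ => (I ℓ, J ℓ)) ∪
        ((Finset.range k).image fun ℓ => (I ((ℓ + 1) % k), J ℓ))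

/-- An edge set is *acyclic* if it contains no simple cycle. -/
def IsAcyclicEdges {m n : ℕ} (E : Finset (Fin m × Fin n)) : Prop :=
  ∀ C ⊆ E, ¬ IsSimpleCycle C

/-- The parity-check matrix of an `(m, n, a = 1, b = 1, h)` grid code over `F` with
global parity-check vectors `c`.  Rows are indexed by `Fin m ⊕ (Fin (n-1) ⊕ Fin h)`
(the `m` row checks, the first `n - 1` column checks, and the `h` global checks) and
columns by `Fin m × Fin n`. -/
def gridH (F : Type*) [Field F] (m n h : ℕ) (c : Fin m × Fin n → Fin h → F) :
    Matrix (Fin m ⊕ (Fin (n - 1) ⊕ Fin h)) (Fin m × Fin n) F :=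
  Matrix.of fun r ij =>
    Sum.elim (fun i => if ij.1 = i then (1 : F) else 0)
      (Sum.elim (fun j : Fin (n - 1) => if (ij.2 : ℕ) = (j : ℕ) then (1 : F) else 0)
        (fun k => c ij k)) r

/-- The grid code with global parity checks `c` is *maximally recoverable* (MR) if the
columns of its parity-check matrix indexed by `E` are linearly independent for every
pattern `E` which is the union of an acyclic edge set and at most `h` further edges. -/
def IsMR (F : Type*) [Field F] (m n h : ℕ) (c : Fin m × Fin n → Fin h → F) : Prop :=
  ∀ E : Finset (Fin m × Fin n),
    (∃ E' F' : Finset (Fin m × Fin n),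
        IsAcyclicEdges E' ∧ F'.card ≤ h ∧ E = E' ∪ F') →
    ((gridH F m n h c).submatrix id (fun e : E => (e : Fin m × Fin n))).rank = E.card

/-- A *spanning tree* of the complete bipartite graph on `[m] ⊔ [n]`: an acyclic edge
set with `m + n - 1` edges. -/
def IsSpanningTree {m n : ℕ} (T : Finset (Fin m × Fin n)) : Prop :=
  IsAcyclicEdges T ∧ T.card = m + n - 1

/-- `IsCycleSumOf c C s` says `C` is a simple cycle
`{(i₁,j₁),(i₂,j₁),…,(i_k,j_k),(i₁,j_k)}` and
`s = Σ_{ℓ=1}^{k} (c^{i_ℓ,j_ℓ} − c^{i_{ℓ+1},j_ℓ})` (with `i_{k+1} := i₁`) is the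
corresponding cycle sum `Σ_H(C) ∈ F^h`. -/
def IsCycleSumOf {F : Type*} [Field F] {m n h : ℕ} (c : Fin m × Fin n → Fin h → F)
    (C : Finset (Fin m × Fin n)) (s : Fin h → F) : Prop :=
  ∃ k : ℕ, 2 ≤ k ∧ ∃ (I : ℕ → Fin m) (J : ℕ → Fin n),
    Set.InjOn I (Set.Iio k) ∧ Set.InjOn J (Set.Iio k) ∧
    C = ((Finset.range k).image fun ℓ => (I ℓ, J ℓ)) ∪
        ((Finset.range k).image fun ℓ => (I ((ℓ + 1) % k), J ℓ)) ∧
    s = ∑ ℓ ∈ Finset.range k, (c (I ℓ, J ℓ) - c (I ((ℓ + 1) % k), J ℓ))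

/-- `IsGammaCycleSumOf γ C g` says `C` is a simple cycle and
`g = γ(C) = Σ_{ℓ=1}^{k} (γ(i_ℓ,j_ℓ) − γ(i_{ℓ+1},j_ℓ))`. -/
def IsGammaCycleSumOf {F : Type*} [Field F] {m n : ℕ} (γ : Fin m × Fin n → F)
    (C : Finset (Fin m × Fin n)) (g : F) : Prop :=
  ∃ k : ℕ, 2 ≤ k ∧ ∃ (I : ℕ → Fin m) (J : ℕ → Fin n),
    Set.InjOn I (Set.Iio k) ∧ Set.InjOn J (Set.Iio k) ∧
    C = ((Finset.range k).image fun ℓ => (I ℓ, J ℓ)) ∪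
        ((Finset.range k).image fun ℓ => (I ((ℓ + 1) % k), J ℓ)) ∧
    g = ∑ ℓ ∈ Finset.range k, (γ (I ℓ, J ℓ) - γ (I ((ℓ + 1) % k), J ℓ))


/-!
Put the small grid in the top-left corner, let `r₀ = m - h₁` and `s₀ = n - h₂` be the first deleted
row and column, and pick `t = h - h'` distinct cells `xᵢ` strictly below `r₀` and right of `s₀`
(there are `(h₁ - 1)(h₂ - 1)` of them). The star at `(r₀, s₀)` is acyclic, so the syndromes `vᵢ` of
the four-cycles through `(r₀, s₀)` and `xᵢ` are linearly independent, and the new code is `c`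
followed by a projection `F^h → F^h'` with kernel `⟨vᵢ⟩`. A small codeword supported on an acyclic
set plus `h'` cells, extended by zero, has syndrome in `⟨vᵢ⟩`; subtracting the matching combination
of four-cycles leaves a big codeword supported on an acyclic set (the small one and the star, which
share no vertex) plus `h' + t = h` cells, hence zero.
-/

namespace Matrix

variable {F : Type*} [Field F] {ι κ : Type*} [Fintype κ]

theorem rank_eq_card_width_iff (N : Matrix ι κ F) :
    N.rank = Fintype.card κ ↔ ∀ v, N *ᵥ v = 0 → v = 0 := by
  rw [← ker_mulVecLin_eq_bot_iff, ← Submodule.finrank_eq_zero, rank,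
    ← Module.finrank_fintype_fun_eq_card (R := F), ← N.mulVecLin.finrank_range_add_finrank_ker]
  omega

theorem rank_submatrix_coe_eq_card_iff (M : Matrix ι κ F) (E : Finset κ) :
    (M.submatrix id ((↑) : E → κ)).rank = #E ↔
      ∀ z : κ → F, (∀ c ∉ E, z c = 0) → M *ᵥ z = 0 → z = 0 := by
  have restrict : ∀ z : κ → F, (∀ c ∉ E, z c = 0) →
      M.submatrix id ((↑) : E → κ) *ᵥ (fun e : E => z e) = M *ᵥ z := by
    intro z hz
    ext r
    simp only [mulVec, dotProduct, submatrix_apply, id]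
    rw [Finset.sum_coe_sort E (fun c => M r c * z c)]
    exact sum_subset (subset_univ E) fun c _ hc => by simp [hz c hc]
  rw [← Fintype.card_coe E, rank_eq_card_width_iff]
  constructor
  · intro h z hz hMz
    have hzE := h _ ((restrict z hz).trans hMz)
    funext c
    by_cases hc : c ∈ E
    · exact congrFun hzE ⟨c, hc⟩
    · exact hz c hc
  · intro h w hw
    classical
    set z : κ → F := fun c => if hc : c ∈ E then w ⟨c, hc⟩ else 0
    have hz : ∀ c ∉ E, z c = 0 := fun c hc => dif_neg hc
    have hzw : (fun e : E => z e) = w := funext fun e => dif_pos e.2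
    rw [← hzw, h z hz (by rw [← restrict z hz, hzw, hw])]
    rfl

end Matrix

theorem Function.Injective.sum_extend_zero_smul {R M α β : Type*} [Semiring R] [AddCommMonoid M]
    [Module R M] [Fintype α] [Fintype β] {f : α → β} (hf : f.Injective) (g : α → R)
    (w : β → M) : ∑ b, Function.extend f g 0 b • w b = ∑ a, g a • w (f a) := by
  classical
  rw [← sum_subset (subset_univ (univ.map ⟨f, hf⟩)), sum_map]
  · simp [hf.extend_apply]
  · intro b _ hb
    rw [Function.extend_apply' _ _ _ (by simpa using hb), Pi.zero_apply, zero_smul]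

theorem Function.Injective.extend_zero_apply_eq_zero {R α β : Type*} [Zero R] [DecidableEq β]
    {f : α → β} (hf : f.Injective) {g : α → R} {S : Finset α} (hg : ∀ a ∉ S, g a = 0) {b : β}
    (hb : b ∉ S.image f) : Function.extend f g 0 b = 0 := by
  by_cases hrange : ∃ a, f a = b
  · obtain ⟨a, rfl⟩ := hrange
    rw [hf.extend_apply]
    exact hg a fun ha => hb (mem_image_of_mem f ha)
  · exact Function.extend_apply' _ _ _ hrange

theorem Submodule.exists_linearMap_ker_eq {K V : Type*} [Field K] [AddCommGroup V] [Module K V]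
    [FiniteDimensional K V] (W : Submodule K V) {d : ℕ}
    (hd : Module.finrank K W + d = Module.finrank K V) :
    ∃ L : V →ₗ[K] (Fin d → K), LinearMap.ker L = W := by
  have hquot : Module.finrank K (V ⧸ W) = Module.finrank K (Fin d → K) := by
    have := W.finrank_quotient_add_finrank
    rw [Module.finrank_fin_fun]
    omega
  refine ⟨(LinearEquiv.ofFinrankEq _ _ hquot).toLinearMap ∘ₗ W.mkQ, ?_⟩
  rw [LinearMap.ker_comp, LinearEquiv.ker, Submodule.comap_bot, Submodule.ker_mkQ]

section Acyclic

variable {m n : ℕ}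

def cycleEdges (k : ℕ) (I : ℕ → Fin m) (J : ℕ → Fin n) : Finset (Fin m × Fin n) :=
  ((range k).image fun ℓ => (I ℓ, J ℓ)) ∪ ((range k).image fun ℓ => (I ((ℓ + 1) % k), J ℓ))

theorem mem_cycleEdges {k : ℕ} {I : ℕ → Fin m} {J : ℕ → Fin n} {e : Fin m × Fin n} :
    e ∈ cycleEdges k I J ↔ ∃ ℓ < k, e = (I ℓ, J ℓ) ∨ e = (I ((ℓ + 1) % k), J ℓ) := by
  simp only [cycleEdges, mem_union, mem_image, mem_range]
  grind

theorem isAcyclicEdges_of_forall_fst_eq_or_snd_eq {r₀ : Fin m} {s₀ : Fin n}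
    {A : Finset (Fin m × Fin n)} (hA : ∀ e ∈ A, e.1 = r₀ ∨ e.2 = s₀) : IsAcyclicEdges A := by
  rintro C hC ⟨k, hk, I, J, hI, hJ, rfl⟩
  have hJs₀ : ∀ ℓ < k, J ℓ = s₀ := by
    intro ℓ hℓ
    by_contra hne
    have h₁ := (hA _ (hC (mem_cycleEdges.2 ⟨ℓ, hℓ, .inl rfl⟩))).resolve_right hne
    have h₂ := (hA _ (hC (mem_cycleEdges.2 ⟨ℓ, hℓ, .inr rfl⟩))).resolve_right hne
    have hmod := hI (Nat.mod_lt _ (by omega)) hℓ (h₂.trans h₁.symm)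
    rcases Nat.lt_or_ge (ℓ + 1) k with hlt | hge
    · rw [Nat.mod_eq_of_lt hlt] at hmod
      omega
    · rw [show ℓ + 1 = k by omega, Nat.mod_self] at hmod
      omega
  have h01 := hJ (show 0 < k by omega) (show 1 < k by omega)
    ((hJs₀ 0 (by omega)).trans (hJs₀ 1 (by omega)).symm)
  omega

theorem IsAcyclicEdges.union_of_separated {P : Fin m → Prop} {Q : Fin n → Prop}
    {A B : Finset (Fin m × Fin n)} (hA : IsAcyclicEdges A) (hB : IsAcyclicEdges B)
    (hAPQ : ∀ e ∈ A, P e.1 ∧ Q e.2) (hBPQ : ∀ e ∈ B, ¬P e.1 ∧ ¬Q e.2) :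
    IsAcyclicEdges (A ∪ B) := by
  rintro C hC ⟨k, hk, I, J, hI, hJ, rfl⟩
  have edge : ∀ e ∈ cycleEdges k I J, (P e.1 ↔ Q e.2) := by
    intro e he
    rcases mem_union.1 (hC he) with heA | heB
    · exact iff_of_true (hAPQ e heA).1 (hAPQ e heA).2
    · exact iff_of_false (hBPQ e heB).1 (hBPQ e heB).2
  -- consecutive rows of the cycle share a column, so `P` is constant along it
  have hrow : ∀ ℓ < k, (P (I ℓ) ↔ P (I 0)) := by
    intro ℓ hℓ
    induction ℓ with
    | zero => rfl
    | succ ℓ ih =>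
      have h₁ := edge _ (mem_cycleEdges.2 ⟨ℓ, by omega, .inr rfl⟩)
      have h₂ := edge _ (mem_cycleEdges.2 ⟨ℓ, by omega, .inl rfl⟩)
      rw [Nat.mod_eq_of_lt hℓ] at h₁
      exact h₁.trans (h₂.symm.trans (ih (by omega)))
  have hall : ∀ e ∈ cycleEdges k I J, (P e.1 ↔ P (I 0)) := by
    intro e he
    obtain ⟨ℓ, hℓ, rfl | rfl⟩ := mem_cycleEdges.1 he
    · exact hrow ℓ hℓ
    · exact hrow _ (Nat.mod_lt _ (by omega))
  by_cases h₀ : P (I 0)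
  · refine hA _ (fun e he => ?_) ⟨k, hk, I, J, hI, hJ, rfl⟩
    exact (mem_union.1 (hC he)).resolve_right fun heB => (hBPQ e heB).1 ((hall e he).2 h₀)
  · refine hB _ (fun e he => ?_) ⟨k, hk, I, J, hI, hJ, rfl⟩
    exact (mem_union.1 (hC he)).resolve_left fun heA => h₀ ((hall e he).1 (hAPQ e heA).1)

theorem IsAcyclicEdges.image_prodMap {m' n' : ℕ} {f : Fin m' → Fin m} {g : Fin n' → Fin n}
    (hf : f.Injective) (hg : g.Injective) {E : Finset (Fin m' × Fin n')}
    (hE : IsAcyclicEdges E) : IsAcyclicEdges (E.image (Prod.map f g)) := by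
  rintro C hC ⟨k, hk, I, J, hI, hJ, rfl⟩
  have hpre : ∀ e ∈ cycleEdges k I J, ∃ p ∈ E, Prod.map f g p = e :=
    fun e he => mem_image.1 (hC he)
  have hrange : ∀ ℓ < k, (∃ a, f a = I ℓ) ∧ ∃ b, g b = J ℓ := by
    intro ℓ hℓ
    obtain ⟨p, -, hp⟩ := hpre _ (mem_cycleEdges.2 ⟨ℓ, hℓ, .inl rfl⟩)
    exact ⟨⟨p.1, congrArg Prod.fst hp⟩, ⟨p.2, congrArg Prod.snd hp⟩⟩
  obtain ⟨⟨a₀, -⟩, ⟨b₀, -⟩⟩ := hrange 0 (by omega)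
  have : Nonempty (Fin m') := ⟨a₀⟩
  have : Nonempty (Fin n') := ⟨b₀⟩
  set I' : ℕ → Fin m' := fun ℓ => Function.invFun f (I ℓ)
  set J' : ℕ → Fin n' := fun ℓ => Function.invFun g (J ℓ)
  have hI' : ∀ ℓ < k, f (I' ℓ) = I ℓ := fun ℓ hℓ => Function.invFun_eq (hrange ℓ hℓ).1
  have hJ' : ∀ ℓ < k, g (J' ℓ) = J ℓ := fun ℓ hℓ => Function.invFun_eq (hrange ℓ hℓ).2
  have hmap : ∀ e ∈ cycleEdges k I' J', Prod.map f g e ∈ cycleEdges k I J := by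
    intro e he
    obtain ⟨ℓ, hℓ, rfl | rfl⟩ := mem_cycleEdges.1 he
    · exact mem_cycleEdges.2 ⟨ℓ, hℓ, .inl (by simp [hI' ℓ hℓ, hJ' ℓ hℓ])⟩
    · exact mem_cycleEdges.2
        ⟨ℓ, hℓ, .inr (by simp [hI' _ (Nat.mod_lt _ (by omega)), hJ' ℓ hℓ])⟩
  refine hE (cycleEdges k I' J') (fun e he => ?_) ⟨k, hk, I', J', ?_, ?_, rfl⟩
  · obtain ⟨p, hp, hpe⟩ := hpre _ (hmap e he)
    rwa [(hf.prodMap hg) hpe] at hp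
  · intro a ha b hb hab
    exact hI ha hb (by rw [← hI' a ha, ← hI' b hb, hab])
  · intro a ha b hb hab
    exact hJ ha hb (by rw [← hJ' a ha, ← hJ' b hb, hab])

theorem IsAcyclicEdges.image_prodMap_union_star {m' n' : ℕ} {f : Fin m' → Fin m}
    {g : Fin n' → Fin n} (hf : f.Injective) (hg : g.Injective) {E : Finset (Fin m' × Fin n')}
    (hE : IsAcyclicEdges E) {r₀ : Fin m} {s₀ : Fin n} {T : Finset (Fin m × Fin n)}
    (hT : ∀ e ∈ T, (e.1 = r₀ ∨ e.2 = s₀) ∧ e.1 ∉ Set.range f ∧ e.2 ∉ Set.range g) :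
    IsAcyclicEdges (E.image (Prod.map f g) ∪ T) :=
  (hE.image_prodMap hf hg).union_of_separated
    (isAcyclicEdges_of_forall_fst_eq_or_snd_eq fun e he => (hT e he).1)
    (P := (· ∈ Set.range f)) (Q := (· ∈ Set.range g))
    (fun e he => by obtain ⟨p, -, rfl⟩ := mem_image.1 he; exact ⟨⟨p.1, rfl⟩, ⟨p.2, rfl⟩⟩)
    (fun e he => (hT e he).2)

end Acyclic

section GridCode

open Matrix

variable {F : Type*} [Field F] {m n h : ℕ}

variable (F m n) in
def gridCycleSpace : Submodule F (Fin m × Fin n → F) where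
  carrier := {z | (∀ i, ∑ j, z (i, j) = 0) ∧ ∀ j, ∑ i, z (i, j) = 0}
  add_mem' := by
    rintro z w ⟨hz, hz'⟩ ⟨hw, hw'⟩
    exact ⟨fun i => by simp [sum_add_distrib, hz, hw], fun j => by simp [sum_add_distrib, hz', hw']⟩
  zero_mem' := by simp
  smul_mem' := by
    rintro a z ⟨hz, hz'⟩
    exact ⟨fun i => by simp [← mul_sum, hz], fun j => by simp [← mul_sum, hz']⟩

theorem mem_gridCycleSpace {z : Fin m × Fin n → F} :
    z ∈ gridCycleSpace F m n ↔ (∀ i, ∑ j, z (i, j) = 0) ∧ ∀ j, ∑ i, z (i, j) = 0 :=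
  Iff.rfl

theorem mem_gridCycleSpace_iff_forall_sum_mul {z : Fin m × Fin n → F} :
    z ∈ gridCycleSpace F m n ↔
      ∀ (a : Fin m → F) (b : Fin n → F), ∑ e, z e * (a e.1 + b e.2) = 0 := by
  have expand : ∀ (a : Fin m → F) (b : Fin n → F), ∑ e, z e * (a e.1 + b e.2) =
      ∑ i, (∑ j, z (i, j)) * a i + ∑ j, (∑ i, z (i, j)) * b j := by
    intro a b
    simp only [mul_add, sum_add_distrib, sum_mul]
    rw [Fintype.sum_prod_type, Fintype.sum_prod_type_right]
  simp only [expand, mem_gridCycleSpace]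
  constructor
  · rintro ⟨hrow, hcol⟩ a b
    simp [hrow, hcol]
  · intro h
    exact ⟨fun i => by simpa [Pi.single_apply] using h (Pi.single i 1) 0,
      fun j => by simpa [Pi.single_apply] using h 0 (Pi.single j 1)⟩

theorem extend_mem_gridCycleSpace {m' n' : ℕ} {f : Fin m' → Fin m} {g : Fin n' → Fin n}
    (hf : f.Injective) (hg : g.Injective) {z : Fin m' × Fin n' → F}
    (hz : z ∈ gridCycleSpace F m' n') :
    Function.extend (Prod.map f g) z 0 ∈ gridCycleSpace F m n := by
  rw [mem_gridCycleSpace_iff_forall_sum_mul] at hz ⊢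
  intro a b
  simpa only [smul_eq_mul] using
    ((hf.prodMap hg).sum_extend_zero_smul z fun e => a e.1 + b e.2).trans (hz (a ∘ f) (b ∘ g))

theorem gridH_mulVec_eq_zero_iff (c : Fin m × Fin n → Fin h → F) (z : Fin m × Fin n → F) :
    gridH F m n h c *ᵥ z = 0 ↔
      z ∈ gridCycleSpace F m n ∧ Fintype.linearCombination F c z = 0 := by
  have row : ∀ i, (gridH F m n h c *ᵥ z) (.inl i) = ∑ j, z (i, j) := by
    intro i
    simp only [mulVec, dotProduct, gridH, of_apply, Sum.elim_inl, ite_mul, one_mul, zero_mul,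
      Fintype.sum_prod_type]
    rw [sum_eq_single i (fun i' _ hi' => by simp [hi']) (by simp)]
    simp
  have col : ∀ j : Fin (n - 1),
      (gridH F m n h c *ᵥ z) (.inr (.inl j)) = ∑ i, z (i, Fin.castLE (n.sub_le 1) j) := by
    intro j
    have hj : ∀ j' : Fin n, (j' : ℕ) = j ↔ j' = Fin.castLE (n.sub_le 1) j := by
      simp [Fin.ext_iff]
    simp only [mulVec, dotProduct, gridH, of_apply, Sum.elim_inr, Sum.elim_inl, hj, ite_mul,
      one_mul, zero_mul, Fintype.sum_prod_type_right]
    rw [sum_eq_single (Fin.castLE (n.sub_le 1) j) (fun j' _ hj' => by simp [hj']) (by simp)]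
    simp
  have glob : ∀ k, (gridH F m n h c *ᵥ z) (.inr (.inr k)) = Fintype.linearCombination F c z k := by
    intro k
    simp [gridH, mulVec, dotProduct, Fintype.linearCombination_apply, mul_comm]
  simp only [funext_iff, Sum.forall, row, col, glob, Pi.zero_apply, mem_gridCycleSpace]
  refine ⟨fun ⟨hrow, hcol, hsyn⟩ => ⟨⟨hrow, fun j => ?_⟩, hsyn⟩,
    fun ⟨⟨hrow, hcol⟩, hsyn⟩ => ⟨hrow, fun j => hcol _, hsyn⟩⟩
  have early : ∀ j' : Fin n, (j' : ℕ) < n - 1 → ∑ i, z (i, j') = 0 :=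
    fun j' hj' => hcol ⟨j', hj'⟩
  by_cases hj : (j : ℕ) < n - 1
  · exact early j hj
  -- the last column: its sum is the total sum, which vanishes by the row checks
  calc ∑ i, z (i, j) = ∑ j', ∑ i, z (i, j') := by
        refine (sum_eq_single j (fun j' _ hj' => early j' ?_) (by simp)).symm
        have := Fin.val_ne_of_ne hj'
        omega
    _ = 0 := by rw [sum_comm]; simp [hrow]

theorem isMR_iff_forall_mem_gridCycleSpace (c : Fin m × Fin n → Fin h → F) :
    IsMR F m n h c ↔
      ∀ E' F' : Finset (Fin m × Fin n), IsAcyclicEdges E' → #F' ≤ h →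
        ∀ z ∈ gridCycleSpace F m n, (∀ e ∉ E' ∪ F', z e = 0) →
          Fintype.linearCombination F c z = 0 → z = 0 := by
  simp only [IsMR, rank_submatrix_coe_eq_card_iff, gridH_mulVec_eq_zero_iff]
  constructor
  · intro hc E' F' hE' hF' z hz hsupp hsyn
    exact hc _ ⟨E', F', hE', hF', rfl⟩ z hsupp ⟨hz, hsyn⟩
  · rintro hc _ ⟨E', F', hE', hF', rfl⟩ z hsupp ⟨hz, hsyn⟩
    exact hc E' F' hE' hF' z hz hsupp hsyn

variable (F) in
def fourCycle (p q : Fin m × Fin n) : Fin m × Fin n → F :=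
  Pi.single p 1 - Pi.single (p.1, q.2) 1 - Pi.single (q.1, p.2) 1 + Pi.single q 1

theorem fourCycle_mem_gridCycleSpace (p q : Fin m × Fin n) :
    fourCycle F p q ∈ gridCycleSpace F m n := by
  constructor <;> intro <;>
    simp [fourCycle, Pi.single_apply, Prod.ext_iff, sum_add_distrib, sum_sub_distrib, ite_and]

theorem fourCycle_apply_of_fst_ne_of_snd_ne {p q e : Fin m × Fin n} (h₁ : e.1 ≠ p.1)
    (h₂ : e.2 ≠ p.2) : fourCycle F p q e = if e = q then 1 else 0 := by
  have : e ≠ p ∧ e ≠ (p.1, q.2) ∧ e ≠ (q.1, p.2) := by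
    refine ⟨?_, ?_, ?_⟩ <;> rintro rfl <;> simp_all
  simp [fourCycle, Pi.single_apply, this]

theorem sum_smul_fourCycle_apply_eq_zero {t : ℕ} {p : Fin m × Fin n} {x : Fin t → Fin m × Fin n}
    (α : Fin t → F) {e : Fin m × Fin n}
    (he : ∀ i, e ∉ ({p, (p.1, (x i).2), ((x i).1, p.2), x i} : Finset (Fin m × Fin n))) :
    (∑ i, α i • fourCycle F p (x i)) e = 0 := by
  rw [Finset.sum_apply]
  refine sum_eq_zero fun i _ => ?_
  have := he i
  simp only [mem_insert, mem_singleton, not_or] at this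
  simp [fourCycle, this]

theorem sum_smul_fourCycle_apply_eq_zero_of_fst_ne {t : ℕ} {p : Fin m × Fin n}
    {x : Fin t → Fin m × Fin n} (α : Fin t → F) {e : Fin m × Fin n} (h₁ : e.1 ≠ p.1)
    (h₂ : ∀ i, e.1 ≠ (x i).1) : (∑ i, α i • fourCycle F p (x i)) e = 0 :=
  sum_smul_fourCycle_apply_eq_zero α fun i => by simp [Prod.ext_iff, h₁, h₂ i]

end GridCode

section MR

variable {F : Type*} [Field F] {m n h : ℕ}

theorem IsMR.linearIndependent_linearCombination_fourCycle {c : Fin m × Fin n → Fin h → F}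
    (hc : IsMR F m n h c) {t : ℕ} (ht : t ≤ h) {r₀ : Fin m} {s₀ : Fin n}
    {x : Fin t → Fin m × Fin n} (hx : x.Injective) (hxr : ∀ i, (x i).1 ≠ r₀)
    (hxs : ∀ i, (x i).2 ≠ s₀) :
    LinearIndependent F fun i => Fintype.linearCombination F c (fourCycle F (r₀, s₀) (x i)) := by
  classical
  rw [Fintype.linearIndependent_iff]
  intro α hα j
  set y := ∑ i, α i • fourCycle F (r₀, s₀) (x i)
  have hy : y = 0 := by
    refine (isMR_iff_forall_mem_gridCycleSpace c).1 hc (univ.filter fun e => e.1 = r₀ ∨ e.2 = s₀)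
      (univ.image x) (isAcyclicEdges_of_forall_fst_eq_or_snd_eq fun e he => (mem_filter.1 he).2)
      (card_image_le.trans (by simpa using ht)) y
      (Submodule.sum_mem _ fun i _ => Submodule.smul_mem _ _ (fourCycle_mem_gridCycleSpace _ _))
      (fun e he => sum_smul_fourCycle_apply_eq_zero α fun i => ?_) (by simpa [y, map_sum] using hα)
    simp only [mem_union, mem_filter, mem_image, mem_univ, true_and, not_or, not_exists] at he
    simp only [mem_insert, mem_singleton, not_or]
    refine ⟨?_, ?_, ?_, fun h => he.2 i h.symm⟩ <;> rintro rfl <;> simp at he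
  have hYx : ∀ i, fourCycle F (r₀, s₀) (x i) (x j) = if x j = x i then 1 else 0 :=
    fun i => fourCycle_apply_of_fst_ne_of_snd_ne (hxr j) (hxs j)
  have hyx : y (x j) = α j := by simp [y, hYx, hx.eq_iff]
  rw [← hyx, hy, Pi.zero_apply]

theorem IsMR.isMR_comp_prodMap {c : Fin m × Fin n → Fin h → F} (hc : IsMR F m n h c)
    {m' n' h' t : ℕ} (ht : h' + t ≤ h) {f : Fin m' → Fin m} {g : Fin n' → Fin n}
    (hf : f.Injective) (hg : g.Injective) {r₀ : Fin m} {s₀ : Fin n} (hr₀ : r₀ ∉ Set.range f)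
    (hs₀ : s₀ ∉ Set.range g) {x : Fin t → Fin m × Fin n} (hxr : ∀ i, (x i).1 ∉ Set.range f)
    (hxs : ∀ i, (x i).2 ∉ Set.range g) {L : (Fin h → F) →ₗ[F] (Fin h' → F)}
    (hL : LinearMap.ker L ≤ Submodule.span F
      (Set.range fun i => Fintype.linearCombination F c (fourCycle F (r₀, s₀) (x i)))) :
    IsMR F m' n' h' fun p => L (c (Prod.map f g p)) := by
  classical
  have hfg := hf.prodMap hg
  rw [isMR_iff_forall_mem_gridCycleSpace] at hc ⊢
  intro E' F' hE' hF' z hz hsupp hsyn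
  set zb := Function.extend (Prod.map f g) z 0
  have hzb_syn : Fintype.linearCombination F c zb ∈ LinearMap.ker L := by
    rw [LinearMap.mem_ker, Fintype.linearCombination_apply, hfg.sum_extend_zero_smul, map_sum]
    simpa [Fintype.linearCombination_apply] using hsyn
  obtain ⟨α, hα⟩ := (Submodule.mem_span_range_iff_exists_fun F).1 (hL hzb_syn)
  set w := ∑ i, α i • fourCycle F (r₀, s₀) (x i)
  set T := univ.filter fun e : Fin m × Fin n =>
    (e.1 = r₀ ∨ e.2 = s₀) ∧ e.1 ∉ Set.range f ∧ e.2 ∉ Set.range g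
  have hw_small : ∀ p, w (Prod.map f g p) = 0 := fun p =>
    sum_smul_fourCycle_apply_eq_zero_of_fst_ne α (fun h => hr₀ ⟨_, h⟩) fun i h => hxr i ⟨_, h⟩
  have hw_supp : ∀ e ∉ T ∪ univ.image x, w e = 0 := by
    intro e he
    refine sum_smul_fourCycle_apply_eq_zero α fun i => ?_
    simp only [T, mem_union, mem_filter, mem_image, mem_univ, true_and, not_or, not_exists] at he
    simp only [mem_insert, mem_singleton, not_or]
    refine ⟨?_, ?_, ?_, fun h => he.2 i h.symm⟩ <;> rintro rfl <;> simp_all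
  have hcard : #(F'.image (Prod.map f g) ∪ univ.image x) ≤ h :=
    (card_union_le _ _).trans (by grw [card_image_le, card_image_le, hF']; simpa)
  have hsupp_big : ∀ e ∉ (E'.image (Prod.map f g) ∪ T) ∪ (F'.image (Prod.map f g) ∪ univ.image x),
      (zb - w) e = 0 := by
    intro e he
    have hzb : zb e = 0 := hfg.extend_zero_apply_eq_zero hsupp fun h => he <| by
      rw [image_union] at h
      rcases mem_union.1 h with h | h <;> simp [h]
    rw [Pi.sub_apply, hzb, hw_supp e fun h => he (by rcases mem_union.1 h with h | h <;> simp [h]),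
      sub_zero]
  have key := hc _ _ (hE'.image_prodMap_union_star hf hg fun e he => (mem_filter.1 he).2) hcard
    (zb - w)
    (sub_mem (extend_mem_gridCycleSpace hf hg hz)
      (Submodule.sum_mem _ fun i _ => Submodule.smul_mem _ _ (fourCycle_mem_gridCycleSpace _ _)))
    hsupp_big (by simp [w, ← hα, map_sum])
  funext p
  simpa [zb, hfg.extend_apply, hw_small] using congrFun key (Prod.map f g p)

theorem IsMR.exists_isMR_of_injective {c : Fin m × Fin n → Fin h → F} (hc : IsMR F m n h c)
    {m' n' h' t : ℕ} (ht : h' + t = h) {f : Fin m' → Fin m} {g : Fin n' → Fin n}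
    (hf : f.Injective) (hg : g.Injective) {r₀ : Fin m} {s₀ : Fin n} (hr₀ : r₀ ∉ Set.range f)
    (hs₀ : s₀ ∉ Set.range g) {x : Fin t → Fin m × Fin n} (hx : x.Injective)
    (hxr : ∀ i, (x i).1 ∉ Set.range f ∧ (x i).1 ≠ r₀)
    (hxs : ∀ i, (x i).2 ∉ Set.range g ∧ (x i).2 ≠ s₀) :
    ∃ c' : Fin m' × Fin n' → Fin h' → F, IsMR F m' n' h' c' := by
  have hv := hc.linearIndependent_linearCombination_fourCycle (by omega) hx (fun i => (hxr i).2)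
    (fun i => (hxs i).2)
  obtain ⟨L, hL⟩ := Submodule.exists_linearMap_ker_eq _ (d := h')
    (by rw [finrank_span_eq_card hv, Module.finrank_fin_fun, Fintype.card_fin]; omega)
  exact ⟨_, hc.isMR_comp_prodMap ht.le hf hg hr₀ hs₀ (fun i => (hxr i).1) (fun i => (hxs i).1)
    hL.le⟩

end MR

theorem statement13_general (m n h h' h₁ h₂ : ℕ) (hh' : h' ≤ h)
    (hh₁ : 1 ≤ h₁) (hh₂ : 1 ≤ h₂) (hprod : h - h' ≤ (h₁ - 1) * (h₂ - 1))
    (hm : 2 ≤ m - h₁) (hn : 2 ≤ n - h₂)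
    (F : Type*) [Field F]
    (hex : ∃ c : Fin m × Fin n → Fin h → F, IsMR F m n h c) :
    ∃ c' : Fin (m - h₁) × Fin (n - h₂) → Fin h' → F,
      IsMR F (m - h₁) (n - h₂) h' c' := by
  obtain ⟨c, hc⟩ := hex
  -- the cells `(m - h₁ + 1 + a, n - h₂ + 1 + b)` with `a < h₁ - 1`, `b < h₂ - 1`
  let x : Fin (h - h') ↪ Fin m × Fin n :=
    (Fin.castLEEmb hprod).trans <| finProdFinEquiv.symm.toEmbedding.trans <|
      ((Fin.natAddEmb (m - h₁ + 1)).trans (Fin.castLEEmb (by omega))).prodMap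
        ((Fin.natAddEmb (n - h₂ + 1)).trans (Fin.castLEEmb (by omega)))
  refine hc.exists_isMR_of_injective (by omega) (Fin.castLE_injective (by omega))
    (Fin.castLE_injective (by omega)) (r₀ := ⟨m - h₁, by omega⟩) (s₀ := ⟨n - h₂, by omega⟩)
    (by simp [Fin.range_castLE]) (by simp [Fin.range_castLE]) x.injective (fun i => ?_)
    (fun i => ?_)
  all_goals
    simp only [x, Function.Embedding.trans_apply, Function.Embedding.coe_prodMap, Prod.map_fst,
      Prod.map_snd, Fin.castLEEmb_apply, Fin.natAddEmb_apply, Fin.range_castLE, Set.mem_ofPred_eq,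
      Fin.ext_iff, Fin.val_castLE, Fin.val_natAdd, ne_eq]
    omega

/-- Theorem A.1.  Let `h ≥ h' ≥ 1` and let `h₁, h₂ ≥ 1` satisfy
`(h₁ - 1)(h₂ - 1) ≥ h - h'`, with `m - h₁ ≥ 2` and `n - h₂ ≥ 2`.  If an MR
`(m, n, a=1, b=1, h)` grid code exists over `F_q`, then an MR
`(m - h₁, n - h₂, a=1, b=1, h')` grid code exists over the same field, so
`q(m, n, 1, 1, h) ≥ q(m - h₁, n - h₂, 1, 1, h')`. -/
theorem statement13 (m n h h' h₁ h₂ : ℕ) (hh'pos : 1 ≤ h') (hh' : h' ≤ h)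
    (hh₁ : 1 ≤ h₁) (hh₂ : 1 ≤ h₂) (hprod : h - h' ≤ (h₁ - 1) * (h₂ - 1))
    (hm : 2 ≤ m - h₁) (hn : 2 ≤ n - h₂)
    (F : Type*) [Field F] [Fintype F]
    (hex : ∃ c : Fin m × Fin n → Fin h → F, IsMR F m n h c) :
    ∃ c' : Fin (m - h₁) × Fin (n - h₂) → Fin h' → F,
      IsMR F (m - h₁) (n - h₂) h' c' :=
  statement13_general m n h h' h₁ h₂ hh' hh₁ hh₂ hprod hm hn F hex
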